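/- Let R be a Jacobi-orthogonal algebraic curvature tensor on a 3-dimensional scalar product space (V, g), and let (A, B, C) be a basis of V consisting of pairwise orthogonal nonnull vectors. Then R(B, A, A, C) · R(A, B, B, C) = 0. -/

import Mathlib

/-!
Since `J_{sX}(tY) = s²t J_X Y`, Jacobi-orthogonality passes from unit to nonnull vectors, so
`g(J_A B, J_B A) = 0`. Expanding this product in the orthogonal basis `(A, B, C)`, the `A`- and
`B`-terms vanish because `R(B,A,A,A) = R(A,B,B,B) = 0`, and what is left is
`R(B,A,A,C) R(A,B,B,C) / g(C,C)`.
-/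

variable {V : Type*} [AddCommGroup V] [Module ℝ V]

/-- `R` is quadrilinear and satisfies the symmetries of an algebraic curvature tensor. -/
def IsCurv (R : V → V → V → V → ℝ) : Prop :=
  (∀ (a : ℝ) (X X' Y Z W : V), R (a • X + X') Y Z W = a * R X Y Z W + R X' Y Z W) ∧
  (∀ (a : ℝ) (X Y Y' Z W : V), R X (a • Y + Y') Z W = a * R X Y Z W + R X Y' Z W) ∧
  (∀ (a : ℝ) (X Y Z Z' W : V), R X Y (a • Z + Z') W = a * R X Y Z W + R X Y Z' W) ∧
  (∀ (a : ℝ) (X Y Z W W' : V), R X Y Z (a • W + W') = a * R X Y Z W + R X Y Z W') ∧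
  (∀ X Y Z W : V, R X Y Z W = - R Y X Z W) ∧
  (∀ X Y Z W : V, R X Y Z W = - R X Y W Z) ∧
  (∀ X Y Z W : V, R X Y Z W = R Z W X Y) ∧
  (∀ X Y Z W : V, R X Y Z W + R Y Z X W + R Z X Y W = 0)

/-- `J X` is the Jacobi operator of `R`: the unique linear map with
`g (J X Y) Z = R Y X X Z` for all `Y Z`. -/
def IsJacobi (g : V →ₗ[ℝ] V →ₗ[ℝ] ℝ) (R : V → V → V → V → ℝ) (J : V → V →ₗ[ℝ] V) : Prop :=
  ∀ X Y Z : V, g (J X Y) Z = R Y X X Z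

/-- Jacobi-orthogonality: `g (J_X Y) (J_Y X) = 0` for all mutually orthogonal unit `X Y`. -/
def JacobiOrthogonal (g : V →ₗ[ℝ] V →ₗ[ℝ] ℝ) (J : V → V →ₗ[ℝ] V) : Prop :=
  ∀ X Y : V, (g X X = 1 ∨ g X X = -1) → (g Y Y = 1 ∨ g Y Y = -1) → g X Y = 0 →
    g (J X Y) (J Y X) = 0

namespace IsCurv

variable {R : V → V → V → V → ℝ}

theorem zero_left (hR : IsCurv R) (Y Z W : V) : R 0 Y Z W = 0 := by
  have h := hR.1 1 0 0 Y Z W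
  rw [one_smul, add_zero, one_mul] at h
  linarith

theorem smul_left (hR : IsCurv R) (a : ℝ) (X Y Z W : V) :
    R (a • X) Y Z W = a * R X Y Z W := by
  simpa [hR.zero_left] using hR.1 a X 0 Y Z W

theorem smul_second (hR : IsCurv R) (a : ℝ) (X Y Z W : V) :
    R X (a • Y) Z W = a * R X Y Z W := by
  rw [hR.2.2.2.2.1, hR.smul_left, hR.2.2.2.2.1 X]
  ring

theorem smul_third (hR : IsCurv R) (a : ℝ) (X Y Z W : V) :
    R X Y (a • Z) W = a * R X Y Z W := by
  rw [hR.2.2.2.2.2.2.1, hR.smul_left, hR.2.2.2.2.2.2.1 Z]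

theorem apply_self_right (hR : IsCurv R) (X Y W : V) : R X Y W W = 0 := by
  have h := hR.2.2.2.2.2.1 X Y W W
  linarith

end IsCurv

section JacobiOperator

variable {g : V →ₗ[ℝ] V →ₗ[ℝ] ℝ} {R : V → V → V → V → ℝ} {J : V → V →ₗ[ℝ] V}

theorem IsJacobi.apply_smul_smul (hR : IsCurv R) (hJ : IsJacobi g R J) (s t : ℝ) (X Y Z : V) :
    g (J (s • X) (t • Y)) Z = s * s * t * g (J X Y) Z := by
  rw [hJ, hJ, hR.smul_left, hR.smul_second, hR.smul_third]
  ring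

theorem IsJacobi.inner_smul_smul (hgsymm : ∀ x y : V, g x y = g y x) (hR : IsCurv R)
    (hJ : IsJacobi g R J) (s t : ℝ) (X Y : V) :
    g (J (s • X) (t • Y)) (J (t • Y) (s • X)) = (s * t) ^ 3 * g (J X Y) (J Y X) := by
  rw [hJ.apply_smul_smul hR, hgsymm, hJ.apply_smul_smul hR, hgsymm (J Y X)]
  ring

end JacobiOperator

theorem exists_smul_unit {g : V →ₗ[ℝ] V →ₗ[ℝ] ℝ} {X : V} (hX : g X X ≠ 0) :
    ∃ s : ℝ, s ≠ 0 ∧ (g (s • X) (s • X) = 1 ∨ g (s • X) (s • X) = -1) := by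
  have hpos : 0 < |g X X| := abs_pos.2 hX
  refine ⟨(√|g X X|)⁻¹, inv_ne_zero (Real.sqrt_pos.2 hpos).ne', ?_⟩
  have hscale : g ((√|g X X|)⁻¹ • X) ((√|g X X|)⁻¹ • X) = g X X / |g X X| := by
    simp only [map_smul, LinearMap.smul_apply, smul_eq_mul]
    rw [← mul_assoc, ← mul_inv, Real.mul_self_sqrt hpos.le, div_eq_inv_mul]
  rw [hscale]
  rcases hX.lt_or_gt with hneg | hpos'
  · right; rw [abs_of_neg hneg, div_neg, div_self hX]
  · left; rw [abs_of_pos hpos', div_self hX]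

theorem JacobiOrthogonal.inner_eq_zero_of_nonnull {g : V →ₗ[ℝ] V →ₗ[ℝ] ℝ}
    {R : V → V → V → V → ℝ} {J : V → V →ₗ[ℝ] V} (hgsymm : ∀ x y : V, g x y = g y x)
    (hR : IsCurv R) (hJ : IsJacobi g R J) (horth : JacobiOrthogonal g J) {X Y : V}
    (hX : g X X ≠ 0) (hY : g Y Y ≠ 0) (hXY : g X Y = 0) :
    g (J X Y) (J Y X) = 0 := by
  obtain ⟨s, hs, hsX⟩ := exists_smul_unit hX
  obtain ⟨t, ht, htY⟩ := exists_smul_unit hY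
  have hunit := horth (s • X) (t • Y) hsX htY (by simp [hXY])
  rw [hJ.inner_smul_smul hgsymm hR] at hunit
  exact (mul_eq_zero.1 hunit).resolve_left (pow_ne_zero 3 (mul_ne_zero hs ht))

theorem LinearMap.apply_eq_sum_of_orthogonal_span {ι : Type*} [Fintype ι]
    {g : V →ₗ[ℝ] V →ₗ[ℝ] ℝ} {v : ι → V} (hspan : Submodule.span ℝ (Set.range v) = ⊤)
    (horth : Pairwise fun i j ↦ g (v i) (v j) = 0) (hnonnull : ∀ i, g (v i) (v i) ≠ 0)
    (U W : V) :
    g U W = ∑ i, g U (v i) * g (v i) W / g (v i) (v i) := by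
  obtain ⟨c, rfl⟩ := (Submodule.mem_span_range_iff_exists_fun ℝ).1
    (hspan ▸ Submodule.mem_top : U ∈ Submodule.span ℝ (Set.range v))
  have hcoeff : ∀ j, g (∑ i, c i • v i) (v j) = c j * g (v j) (v j) := by
    intro j
    rw [map_sum, LinearMap.sum_apply, Finset.sum_eq_single j]
    · simp
    · intro i _ hij
      simp [horth hij]
    · simp
  simp only [hcoeff]
  rw [map_sum, LinearMap.sum_apply]
  refine Finset.sum_congr rfl fun i _ ↦ ?_
  simp only [map_smul, LinearMap.smul_apply, smul_eq_mul]
  field_simp [hnonnull i]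

theorem stmt_11_general {V : Type*} [AddCommGroup V] [Module ℝ V]
(g : V →ₗ[ℝ] V →ₗ[ℝ] ℝ) (hgsymm : ∀ x y : V, g x y = g y x)
    (R : V → V → V → V → ℝ) (hR : IsCurv R)
    (J : V → V →ₗ[ℝ] V) (hJ : IsJacobi g R J)
    (horth : JacobiOrthogonal g J)
    (A B C : V)
    (hbasis : LinearIndependent ℝ ![A, B, C] ∧
      Submodule.span ℝ ({A, B, C} : Set V) = ⊤)
    (hAB : g A B = 0) (hAC : g A C = 0) (hBC : g B C = 0)
    (hA : g A A ≠ 0) (hB : g B B ≠ 0) (hC : g C C ≠ 0) :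
    R B A A C * R A B B C = 0 := by
  have hJorth : g (J A B) (J B A) = 0 :=
    horth.inner_eq_zero_of_nonnull hgsymm hR hJ hA hB hAB
  have hspan : Submodule.span ℝ (Set.range ![A, B, C]) = ⊤ := by
    rw [Matrix.range_cons, Matrix.range_cons_cons_empty, Set.singleton_union]
    exact hbasis.2
  have hpair : Pairwise fun i j ↦ g (![A, B, C] i) (![A, B, C] j) = 0 := by
    intro i j hij
    fin_cases i <;> fin_cases j <;>
      simp [hAB, hAC, hBC, hgsymm B A, hgsymm C A, hgsymm C B] at hij ⊢
  have hnonnull : ∀ i, g (![A, B, C] i) (![A, B, C] i) ≠ 0 := by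
    intro i; fin_cases i <;> assumption
  have hexpand := LinearMap.apply_eq_sum_of_orthogonal_span hspan hpair hnonnull (J A B) (J B A)
  rw [hJorth, Fin.sum_univ_three] at hexpand
  simp only [Matrix.cons_val_zero, Matrix.cons_val_one, Matrix.cons_val_two, Matrix.head_cons,
    Matrix.tail_cons, hgsymm _ (J B A), hJ _ _ _, hR.apply_self_right, zero_mul, mul_zero,
    zero_div, zero_add] at hexpand
  exact (div_eq_zero_iff.1 hexpand.symm).resolve_right hC

/-- for a Jacobi-orthogonal R on a 3-dimensional scalar product space and a
basis (A, B, C) of pairwise orthogonal nonnull vectors, R(B,A,A,C)·R(A,B,B,C) = 0. -/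
theorem stmt_11 {V : Type*} [AddCommGroup V] [Module ℝ V] [FiniteDimensional ℝ V]
    (hdim : Module.finrank ℝ V = 3)
(g : V →ₗ[ℝ] V →ₗ[ℝ] ℝ) (hgsymm : ∀ x y : V, g x y = g y x)
    (hgnd : ∀ x : V, (∀ y : V, g x y = 0) → x = 0)
    (R : V → V → V → V → ℝ) (hR : IsCurv R)
    (J : V → V →ₗ[ℝ] V) (hJ : IsJacobi g R J)
    (horth : JacobiOrthogonal g J)
    (A B C : V)
    (hbasis : LinearIndependent ℝ ![A, B, C] ∧
      Submodule.span ℝ ({A, B, C} : Set V) = ⊤)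
    (hAB : g A B = 0) (hAC : g A C = 0) (hBC : g B C = 0)
    (hA : g A A ≠ 0) (hB : g B B ≠ 0) (hC : g C C ≠ 0) :
    R B A A C * R A B B C = 0 :=
  stmt_11_general g hgsymm R hR J hJ horth A B C hbasis hAB hAC hBC hA hB hC
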